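/- arXiv:2010.12487 — 8 statements merged into one kernel-verified Lean document; each statement's English description precedes it below -/
import Mathlib

section
/- Let d ≥ 1, ν > 0 and 0 ≤ p ≤ d. Let S be the LIME random subset of {1,…,d} with associated z_j = 1{j ∉ S} and weight π = ψ_ν(|S|/d). Then E[π · z_1 z_2 ⋯ z_p] = (1/d) · Σ_{s=1}^{d} [Π_{k=0}^{p−1} (d−s−k)/(d−k)] · ψ_ν(s/d) (for p = 0 the product of z's is 1 and the inner product over k is empty, giving E[π] = (1/d)Σ_{s=1}^d ψ_ν(s/d)). -/
/-! Given `|S| = s`, the weight `π` is the constant `ψ_ν(s/d)` and `z_1 ⋯ z_p` is the indicator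
that `S` avoids `{1,…,p}`; exactly `C(d-p, s)` of the `C(d, s)` subsets of size `s` do, and
`C(d-p, s) / C(d, s) = ∏_{k<p} (d-s-k)/(d-k)` because both sides equal
`(d-s)^{(p)} / d^{(p)}` in falling factorials. -/

noncomputable section

/-- The LIME weight function ψ_ν(t) = exp(−(1−√(1−t))²/(2ν²)). -/
def psi (ν t : ℝ) : ℝ := Real.exp (-(1 - Real.sqrt (1 - t)) ^ 2 / (2 * ν ^ 2))

/-- Expectation of `g S` where `S` is the LIME random subset of `{1,…,d}`:
first draw `s` uniformly in `{1,…,d}`, then `S` uniformly among subsets of cardinality `s`. -/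
def limeExp (d : ℕ) (g : Finset (Fin d) → ℝ) : ℝ :=
  (1 / (d : ℝ)) * ∑ s ∈ Finset.Icc 1 d, ((d.choose s : ℝ))⁻¹ *
    ∑ S ∈ Finset.univ.filter (fun S : Finset (Fin d) => S.card = s), g S

/-- The coefficient α_p(d,ν). -/
def alpha (d : ℕ) (ν : ℝ) (p : ℕ) : ℝ :=
  (1 / (d : ℝ)) * ∑ s ∈ Finset.Icc 1 d,
    (∏ k ∈ Finset.range p, (((d : ℝ) - (s : ℝ) - (k : ℝ)) / ((d : ℝ) - (k : ℝ)))) *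
      psi ν ((s : ℝ) / (d : ℝ))

open Finset

theorem Nat.choose_sub_mul_descFactorial (n p s : ℕ) :
    (n - p).choose s * n.descFactorial p = n.choose s * (n - s).descFactorial p := by
  induction p with
  | zero => simp
  | succ p ih =>
    rw [Nat.descFactorial_succ, Nat.descFactorial_succ]
    rcases Nat.lt_or_ge p n with hpn | hnp
    · have step := Nat.choose_mul_succ_eq (n - (p + 1)) s
      rw [show n - (p + 1) + 1 = n - p by omega] at step
      calc (n - (p + 1)).choose s * ((n - p) * n.descFactorial p)
          = (n - p).choose s * (n - p - s) * n.descFactorial p := by rw [← step]; ring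
        _ = (n - s - p) * ((n - p).choose s * n.descFactorial p) := by
          rw [show n - p - s = n - s - p by omega]; ring
        _ = n.choose s * ((n - s - p) * (n - s).descFactorial p) := by rw [ih]; ring
    · simp [Nat.sub_eq_zero_of_le hnp, show n - s - p = 0 by omega]

theorem prod_range_natCast_sub_eq_descFactorial {R : Type*} [CommRing R] (n p : ℕ) :
    ∏ k ∈ range p, ((n : R) - k) = n.descFactorial p := by
  rw [← descPochhammer_eval_eq_prod_range, descPochhammer_eval_eq_descFactorial]

theorem prod_range_sub_div_sub_eq_choose_div_choose {n p s : ℕ} (hp : p ≤ n) (hs : s ≤ n) :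
    ∏ k ∈ range p, (((n : ℝ) - s - k) / ((n : ℝ) - k)) = ((n - p).choose s : ℝ) / n.choose s := by
  have hdesc : (n.descFactorial p : ℝ) ≠ 0 := by
    exact_mod_cast (Nat.descFactorial_pos.2 hp).ne'
  have hchoose : (n.choose s : ℝ) ≠ 0 := by exact_mod_cast (Nat.choose_pos hs).ne'
  rw [prod_div_distrib, ← Nat.cast_sub hs, prod_range_natCast_sub_eq_descFactorial,
    prod_range_natCast_sub_eq_descFactorial, div_eq_div_iff hdesc hchoose]
  norm_cast
  rw [Nat.choose_sub_mul_descFactorial, mul_comm]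

theorem Finset.card_filter_card_eq_disjoint {α : Type*} [Fintype α] [DecidableEq α]
    (P : Finset α) (s : ℕ) :
    #{S : Finset α | S.card = s ∧ Disjoint P S} = (Fintype.card α - #P).choose s := by
  rw [← card_compl, ← card_powersetCard]
  congr 1
  ext S
  simp [mem_powersetCard, subset_compl_iff_disjoint_left, and_comm]

theorem Finset.sum_filter_card_eq_mul_prod_ite_notMem {α R : Type*} [Fintype α] [DecidableEq α]
    [CommSemiring R] (P : Finset α) (s : ℕ) (f : ℕ → R) :
    ∑ S ∈ univ.filter (fun S : Finset α => S.card = s),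
        f S.card * ∏ j ∈ P, (if j ∉ S then (1 : R) else 0)
      = (Fintype.card α - #P).choose s * f s := by
  have hterm : ∀ S ∈ univ.filter (fun S : Finset α => S.card = s),
      f S.card * ∏ j ∈ P, (if j ∉ S then (1 : R) else 0) = if Disjoint P S then f s else 0 := by
    intro S hS
    rw [(mem_filter.1 hS).2, prod_boole, mul_boole]
    simp only [← disjoint_left]
  rw [sum_congr rfl hterm, ← sum_filter, sum_const, filter_filter, card_filter_card_eq_disjoint,
    nsmul_eq_mul]

theorem lime_alpha_formula_general (d : ℕ) (ν : ℝ)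
    (p : ℕ) (hp : p ≤ d) :
    limeExp d (fun S => psi ν ((S.card : ℝ) / (d : ℝ)) *
        ∏ j ∈ Finset.univ.filter (fun j : Fin d => (j : ℕ) < p),
          (if j ∉ S then (1 : ℝ) else 0))
      = alpha d ν p := by
  unfold limeExp alpha
  congr 1
  refine sum_congr rfl fun s hs => ?_
  rw [sum_filter_card_eq_mul_prod_ite_notMem _ s (fun n : ℕ => psi ν (n / d)), Fin.card_filter_val_lt,
    Fintype.card_fin, min_eq_right hp,
    prod_range_sub_div_sub_eq_choose_div_choose hp (mem_Icc.1 hs).2]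
  ring

/-- E[π · z_1 ⋯ z_p] = α_p(d,ν), where the product is over the
first `p` indices of `{1,…,d}`, `z_j = 1{j ∉ S}` and `π = ψ_ν(|S|/d)`. -/
theorem lime_alpha_formula (d : ℕ) (hd : 1 ≤ d) (ν : ℝ) (hν : 0 < ν)
    (p : ℕ) (hp : p ≤ d) :
    limeExp d (fun S => psi ν ((S.card : ℝ) / (d : ℝ)) *
        ∏ j ∈ Finset.univ.filter (fun j : Fin d => (j : ℕ) < p),
          (if j ∉ S then (1 : ℝ) else 0))
      = alpha d ν p :=
  lime_alpha_formula_general d ν p hp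
end
end

section
/- Let d ≥ 1, ν > 0 and 0 ≤ p ≤ d. Then ((d−p)/((p+1)d)) · exp(−1/(2ν²)) ≤ α_p(d,ν) ≤ (d−p)/((p+1)d). -/
noncomputable section

/-!
`α_p(d,ν)` is `1/d` times a weighted sum of values of `ψ_ν` at points of `[0, 1]`,
where `ψ_ν` takes values in `[exp(−1/(2ν²)), 1]`. The weights are the nonnegative ratios
`C(d−s, p) / C(d, p)`, and by the hockey-stick identity they sum to
`C(d, p+1) / C(d, p) = (d−p)/(p+1)`.
-/

open Finset

theorem psi_le_one (ν t : ℝ) : psi ν t ≤ 1 := by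
  rw [psi, Real.exp_le_one_iff]
  exact div_nonpos_of_nonpos_of_nonneg (neg_nonpos.2 (sq_nonneg _)) (by positivity)

theorem exp_neg_inv_le_psi (ν : ℝ) {t : ℝ} (ht : 0 ≤ t) :
    Real.exp (-1 / (2 * ν ^ 2)) ≤ psi ν t := by
  have hsqrt_le_one : Real.sqrt (1 - t) ≤ 1 := Real.sqrt_le_one.2 (by linarith)
  have hsqrt_nonneg : 0 ≤ Real.sqrt (1 - t) := Real.sqrt_nonneg _
  rw [psi, Real.exp_le_exp]
  gcongr
  nlinarith

theorem prod_range_natCast_sub (R : Type*) [CommRing R] (n p : ℕ) :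
    ∏ k ∈ range p, ((n : R) - k) = n.descFactorial p := by
  rw [← descPochhammer_eval_eq_prod_range, descPochhammer_eval_eq_descFactorial]

theorem Nat.sum_range_choose_eq_choose_succ (n k : ℕ) :
    ∑ i ∈ range n, i.choose k = n.choose (k + 1) := by
  induction n with
  | zero => simp
  | succ n ih => rw [sum_range_succ, ih, Nat.choose_succ_succ', add_comm]

theorem Nat.sum_Icc_choose_sub (d p : ℕ) :
    ∑ s ∈ Icc 1 d, (d - s).choose p = d.choose (p + 1) := by
  rw [← Nat.sum_range_choose_eq_choose_succ, ← Ico_add_one_right_eq_Icc, sum_Ico_eq_sum_range,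
    Nat.add_sub_cancel, ← sum_range_reflect]
  refine sum_congr rfl fun i hi => ?_
  rw [mem_range] at hi
  congr 1
  omega

def alphaWeight (d p s : ℕ) : ℝ :=
  ∏ k ∈ range p, (((d : ℝ) - (s : ℝ) - (k : ℝ)) / ((d : ℝ) - (k : ℝ)))

theorem alpha_eq_sum_alphaWeight (d : ℕ) (ν : ℝ) (p : ℕ) :
    alpha d ν p = 1 / (d : ℝ) * ∑ s ∈ Icc 1 d, alphaWeight d p s * psi ν ((s : ℝ) / d) :=
  rfl

theorem alphaWeight_eq_choose_div_choose {d s : ℕ} (p : ℕ) (hs : s ≤ d) :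
    alphaWeight d p s = (d - s).choose p / d.choose p := by
  have hfactorial : (p.factorial : ℝ) ≠ 0 := by positivity
  rw [alphaWeight, prod_div_distrib, ← Nat.cast_sub hs, prod_range_natCast_sub,
    prod_range_natCast_sub, Nat.descFactorial_eq_factorial_mul_choose,
    Nat.descFactorial_eq_factorial_mul_choose, Nat.cast_mul, Nat.cast_mul,
    mul_div_mul_left _ _ hfactorial]

theorem alphaWeight_nonneg {d s : ℕ} (p : ℕ) (hs : s ≤ d) : 0 ≤ alphaWeight d p s := by
  rw [alphaWeight_eq_choose_div_choose p hs]
  positivity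

theorem sum_alphaWeight {d p : ℕ} (hp : p ≤ d) :
    ∑ s ∈ Icc 1 d, alphaWeight d p s = ((d : ℝ) - p) / (p + 1) := by
  have hchoose_pos : (0 : ℝ) < d.choose p := by exact_mod_cast Nat.choose_pos hp
  have hchoose_succ := congrArg (Nat.cast : ℕ → ℝ) (Nat.choose_succ_right_eq d p)
  push_cast [Nat.cast_sub hp] at hchoose_succ
  rw [sum_congr rfl fun s hs => alphaWeight_eq_choose_div_choose p (mem_Icc.1 hs).2,
    ← sum_div, ← Nat.cast_sum, Nat.sum_Icc_choose_sub,
    div_eq_div_iff hchoose_pos.ne' (by positivity)]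
  linarith

theorem alpha_bounds_general (d : ℕ) (ν : ℝ) (p : ℕ) (hp : p ≤ d) :
    (((d : ℝ) - (p : ℝ)) / (((p : ℝ) + 1) * (d : ℝ))) * Real.exp (-1 / (2 * ν ^ 2))
        ≤ alpha d ν p
      ∧ alpha d ν p ≤ ((d : ℝ) - (p : ℝ)) / (((p : ℝ) + 1) * (d : ℝ)) := by
  have hweight_nonneg : ∀ s ∈ Icc 1 d, 0 ≤ alphaWeight d p s :=
    fun s hs => alphaWeight_nonneg p (mem_Icc.1 hs).2
  have hbound :
      ((d : ℝ) - p) / ((p + 1) * d) = 1 / (d : ℝ) * ∑ s ∈ Icc 1 d, alphaWeight d p s := by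
    rw [sum_alphaWeight hp, one_div_mul_eq_div, div_div]
  have hlower : (∑ s ∈ Icc 1 d, alphaWeight d p s) * Real.exp (-1 / (2 * ν ^ 2))
      ≤ ∑ s ∈ Icc 1 d, alphaWeight d p s * psi ν ((s : ℝ) / d) := by
    rw [sum_mul]
    exact sum_le_sum fun s hs =>
      mul_le_mul_of_nonneg_left (exp_neg_inv_le_psi ν (by positivity)) (hweight_nonneg s hs)
  have hupper : ∑ s ∈ Icc 1 d, alphaWeight d p s * psi ν ((s : ℝ) / d)
      ≤ ∑ s ∈ Icc 1 d, alphaWeight d p s :=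
    sum_le_sum fun s hs => mul_le_of_le_one_right (hweight_nonneg s hs) (psi_le_one ν _)
  rw [hbound, alpha_eq_sum_alphaWeight, mul_assoc]
  exact ⟨by gcongr, by gcongr⟩

/-- ((d−p)/((p+1)d)) · exp(−1/(2ν²)) ≤ α_p(d,ν) ≤ (d−p)/((p+1)d). -/
theorem alpha_bounds (d : ℕ) (hd : 1 ≤ d) (ν : ℝ) (hν : 0 < ν) (p : ℕ) (hp : p ≤ d) :
    (((d : ℝ) - (p : ℝ)) / (((p : ℝ) + 1) * (d : ℝ))) * Real.exp (-1 / (2 * ν ^ 2))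
        ≤ alpha d ν p
      ∧ alpha d ν p ≤ ((d : ℝ) - (p : ℝ)) / (((p : ℝ) + 1) * (d : ℝ)) :=
  alpha_bounds_general d ν p hp
end
end

section
/- Let d ≥ 1 and ν > 0, and write α_0, α_1, α_2 for α_0(d,ν), α_1(d,ν), α_2(d,ν). Assume c_d ≠ 0 and α_1 ≠ α_2. Let Σ ∈ ℝ^{(d+1)×(d+1)} (rows and columns indexed by 0,…,d) be the matrix with Σ_{0,0} = α_0, Σ_{0,j} = Σ_{j,0} = Σ_{j,j} = α_1 for 1 ≤ j ≤ d, and Σ_{j,k} = α_2 for 1 ≤ j ≠ k ≤ d. Let M ∈ ℝ^{(d+1)×(d+1)} be the matrix with M_{0,0} = σ_0/c_d, M_{0,j} = M_{j,0} = σ_1/c_d for 1 ≤ j ≤ d, M_{j,j} = σ_2/c_d for 1 ≤ j ≤ d, and M_{j,k} = σ_3/c_d for 1 ≤ j ≠ k ≤ d. Then Σ · M = I_{d+1}, i.e. M is the inverse of Σ. -/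
noncomputable section

/-- The normalization constant c_d = (d−1)α₀α₂ − dα₁² + α₀α₁. -/
def cConst (d : ℕ) (ν : ℝ) : ℝ :=
  ((d : ℝ) - 1) * alpha d ν 0 * alpha d ν 2 - (d : ℝ) * (alpha d ν 1) ^ 2
    + alpha d ν 0 * alpha d ν 1

/-- σ₀ = (d−1)α₂ + α₁. -/
def sigma0 (d : ℕ) (ν : ℝ) : ℝ := ((d : ℝ) - 1) * alpha d ν 2 + alpha d ν 1

/-- σ₁ = −α₁. -/
def sigma1 (d : ℕ) (ν : ℝ) : ℝ := -(alpha d ν 1)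

/-- σ₂ = ((d−2)α₀α₂ − (d−1)α₁² + α₀α₁)/(α₁−α₂). -/
def sigma2 (d : ℕ) (ν : ℝ) : ℝ :=
  (((d : ℝ) - 2) * alpha d ν 0 * alpha d ν 2 - ((d : ℝ) - 1) * (alpha d ν 1) ^ 2
      + alpha d ν 0 * alpha d ν 1) / (alpha d ν 1 - alpha d ν 2)

/-- σ₃ = (α₁² − α₀α₂)/(α₁−α₂). -/
def sigma3 (d : ℕ) (ν : ℝ) : ℝ :=
  ((alpha d ν 1) ^ 2 - alpha d ν 0 * alpha d ν 2) / (alpha d ν 1 - alpha d ν 2)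

/-- The matrix Σ ∈ ℝ^{(d+1)×(d+1)}: Σ₀₀ = α₀; Σ₀ⱼ = Σⱼ₀ = Σⱼⱼ = α₁ for 1 ≤ j ≤ d;
Σⱼₖ = α₂ for 1 ≤ j ≠ k ≤ d. -/
def SigmaMat (d : ℕ) (ν : ℝ) : Matrix (Fin (d + 1)) (Fin (d + 1)) ℝ :=
  Matrix.of fun i j =>
    if i = 0 ∧ j = 0 then alpha d ν 0
    else if i = 0 ∨ j = 0 ∨ i = j then alpha d ν 1
    else alpha d ν 2

/-- The claimed inverse matrix M = (1/c_d)·(σ-pattern). -/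
def InvMat (d : ℕ) (ν : ℝ) : Matrix (Fin (d + 1)) (Fin (d + 1)) ℝ :=
  Matrix.of fun i j =>
    if i = 0 ∧ j = 0 then sigma0 d ν / cConst d ν
    else if i = 0 ∨ j = 0 then sigma1 d ν / cConst d ν
    else if i = j then sigma2 d ν / cConst d ν
    else sigma3 d ν / cConst d ν

/-!
Both `Σ` and `c_d M` are bordered matrices: a corner, a constant rest of the first row, a
constant rest of the first column, and a trailing `d × d` block with one constant on the
diagonal and another off it. Such matrices are closed under multiplication, the five parameters
of the product being polynomials in those of the factors. So `Σ · (c_d M) = c_d • 1` reduces to five rational identities in `α₀, α₁, α₂, d`,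
whose only denominator is `α₁ - α₂`.
-/

section SumIte

variable {R ι : Type*} [CommRing R] [Fintype ι] [DecidableEq ι]

theorem Fintype.sum_ite_eq_const (j : ι) (c e : R) :
    ∑ k, (if k = j then c else e) = c + (Fintype.card ι - 1) * e := by
  rw [Fintype.sum_eq_add_sum_compl j, if_pos rfl,
    Finset.sum_congr rfl fun k hk => if_neg (Finset.mem_compl.mp hk ∘ Finset.mem_singleton.mpr)]
  simp [Finset.card_compl, Nat.cast_sub (Fintype.card_pos_iff.mpr ⟨j⟩)]

theorem Fintype.sum_ite_eq_const' (j : ι) (c e : R) :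
    ∑ k, (if j = k then c else e) = c + (Fintype.card ι - 1) * e := by
  simp_rw [eq_comm (a := j), Fintype.sum_ite_eq_const]

theorem Fintype.sum_ite_eq_const_mul_ite_eq_const (i j : ι) (c e c' e' : R) :
    ∑ k, (if i = k then c else e) * (if k = j then c' else e') =
      if i = j then c * c' + (Fintype.card ι - 1) * (e * e')
      else c * e' + e * c' + (Fintype.card ι - 2) * (e * e') := by
  have expand : ∀ k, (if i = k then c else e) * (if k = j then c' else e') =
      e * e' + (if k = i then (c - e) * e' else 0) + (if k = j then e * (c' - e') else 0)
        + (if i = j then (if k = j then (c - e) * (c' - e') else 0) else 0) := by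
    intro k
    rcases eq_or_ne k i with rfl | hki <;> rcases eq_or_ne k j with rfl | hkj <;>
      simp [*, Ne.symm] <;> ring
  simp only [expand, Finset.sum_add_distrib, Finset.sum_ite_eq', Finset.mem_univ, if_true,
    Finset.sum_const, Finset.card_univ, nsmul_eq_mul]
  split_ifs <;> simp <;> ring

end SumIte

section BorderedMatrix

variable {R : Type*} {n : ℕ}

/-- Corner `a`, rest of the first row `r`, rest of the first column `l`, and `c` on / `e` off the
diagonal of the trailing `n × n` block. -/
def borderedMatrix (n : ℕ) (a r l c e : R) : Matrix (Fin (n + 1)) (Fin (n + 1)) R :=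
  Matrix.of fun i j =>
    Fin.cases (Fin.cases a (fun _ => r) j)
      (fun i' => Fin.cases l (fun j' => if i' = j' then c else e) j) i

variable {a r l c e : R}

@[simp] theorem borderedMatrix_zero_zero : borderedMatrix n a r l c e 0 0 = a := rfl

@[simp] theorem borderedMatrix_zero_succ (j : Fin n) :
    borderedMatrix n a r l c e 0 j.succ = r := rfl

@[simp] theorem borderedMatrix_succ_zero (i : Fin n) :
    borderedMatrix n a r l c e i.succ 0 = l := rfl

@[simp] theorem borderedMatrix_succ_succ (i j : Fin n) :
    borderedMatrix n a r l c e i.succ j.succ = if i = j then c else e := rfl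

theorem borderedMatrix_one [Zero R] [One R] : borderedMatrix n (1 : R) 0 0 1 0 = 1 := by
  ext i j
  refine Fin.cases ?_ (fun i => ?_) i <;> refine Fin.cases ?_ (fun j => ?_) j <;>
    simp [Matrix.one_apply, Fin.succ_ne_zero, Fin.succ_ne_zero _ |>.symm]

theorem smul_borderedMatrix [Mul R] (k : R) :
    k • borderedMatrix n a r l c e = borderedMatrix n (k * a) (k * r) (k * l) (k * c) (k * e) := by
  ext i j
  refine Fin.cases ?_ (fun i => ?_) i <;> refine Fin.cases ?_ (fun j => ?_) j <;>
    simp [mul_ite]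

theorem borderedMatrix_smul_one [MulZeroOneClass R] (k : R) :
    borderedMatrix n k 0 0 k 0 = k • 1 := by
  rw [← borderedMatrix_one, smul_borderedMatrix]
  simp

theorem borderedMatrix_mul [CommRing R] (a' r' l' c' e' : R) :
    borderedMatrix n a r l c e * borderedMatrix n a' r' l' c' e' =
      borderedMatrix n (a * a' + n * (r * l')) (a * r' + r * c' + (n - 1) * (r * e'))
        (l * a' + c * l' + (n - 1) * (e * l')) (l * r' + c * c' + (n - 1) * (e * e'))
        (l * r' + c * e' + e * c' + (n - 2) * (e * e')) := by
  ext i j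
  refine Fin.cases ?_ (fun i => ?_) i <;> refine Fin.cases ?_ (fun j => ?_) j <;>
    simp only [Matrix.mul_apply, Fin.sum_univ_succ, borderedMatrix_zero_zero,
      borderedMatrix_zero_succ, borderedMatrix_succ_zero, borderedMatrix_succ_succ,
      ← Finset.mul_sum, ← Finset.sum_mul, Fintype.sum_ite_eq_const, Fintype.sum_ite_eq_const',
      Fintype.sum_ite_eq_const_mul_ite_eq_const, Finset.sum_const, Finset.card_univ,
      Fintype.card_fin, nsmul_eq_mul] <;>
    (try split_ifs) <;> ring

end BorderedMatrix

theorem SigmaMat_eq_borderedMatrix (d : ℕ) (ν : ℝ) :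
    SigmaMat d ν = borderedMatrix d (alpha d ν 0) (alpha d ν 1) (alpha d ν 1) (alpha d ν 1)
      (alpha d ν 2) := by
  ext i j
  refine Fin.cases ?_ (fun i => ?_) i <;> refine Fin.cases ?_ (fun j => ?_) j <;>
    simp [SigmaMat, Fin.succ_ne_zero]

theorem InvMat_eq_inv_smul_borderedMatrix (d : ℕ) (ν : ℝ) :
    InvMat d ν = (cConst d ν)⁻¹ •
      borderedMatrix d (sigma0 d ν) (sigma1 d ν) (sigma1 d ν) (sigma2 d ν) (sigma3 d ν) := by
  rw [smul_borderedMatrix]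
  ext i j
  refine Fin.cases ?_ (fun i => ?_) i <;> refine Fin.cases ?_ (fun j => ?_) j <;>
    simp [InvMat, Fin.succ_ne_zero, div_eq_inv_mul]

theorem SigmaMat_mul_borderedMatrix_sigma (d : ℕ) (ν : ℝ) (hα : alpha d ν 1 ≠ alpha d ν 2) :
    SigmaMat d ν *
        borderedMatrix d (sigma0 d ν) (sigma1 d ν) (sigma1 d ν) (sigma2 d ν) (sigma3 d ν) =
      cConst d ν • 1 := by
  have hα' : alpha d ν 1 - alpha d ν 2 ≠ 0 := sub_ne_zero.mpr hα
  rw [SigmaMat_eq_borderedMatrix, borderedMatrix_mul, ← borderedMatrix_smul_one]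
  congr 1 <;> simp only [cConst, sigma0, sigma1, sigma2, sigma3] <;> field_simp <;> ring

theorem SigmaMat_mul_InvMat_general (d : ℕ) (ν : ℝ)
    (hc : cConst d ν ≠ 0) (hα : alpha d ν 1 ≠ alpha d ν 2) :
    SigmaMat d ν * InvMat d ν = 1 := by
  rw [InvMat_eq_inv_smul_borderedMatrix, Matrix.mul_smul,
    SigmaMat_mul_borderedMatrix_sigma d ν hα, smul_smul, inv_mul_cancel₀ hc, one_smul]

/-- if c_d ≠ 0 and α₁ ≠ α₂ then Σ · M = I, i.e. M is the inverse of Σ. -/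
theorem SigmaMat_mul_InvMat (d : ℕ) (hd : 1 ≤ d) (ν : ℝ) (hν : 0 < ν)
    (hc : cConst d ν ≠ 0) (hα : alpha d ν 1 ≠ alpha d ν 2) :
    SigmaMat d ν * InvMat d ν = 1 :=
  SigmaMat_mul_InvMat_general d ν hc hα
end
end

section
/- Let d ≥ 2. As ν → +∞: c_d(d,ν) converges to (d²−1)/(12d); σ_0/c_d converges to 2(2d−1)/(d+1); σ_1/c_d converges to −6/(d+1); σ_2/c_d converges to 6(d²−2d+3)/((d+1)(d−1)); and σ_3/c_d converges to −6(d−3)/((d+1)(d−1)). -/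
/-!
As `ν → ∞`, `ψ_ν → 1` pointwise, so `α_p` tends to its value at `ψ ≡ 1`. Substituting
`m = d - s`, that value is `(1/d) ∑_{m<d} C(m,p) / C(d,p) = (d - p) / ((p + 1) d)` by the
hockey-stick identity. The quantities `c_d` and `σ_i` are rational functions of `α_0, α_1, α_2`
whose denominators have nonzero limits, so their limits are read off at
`α = (1, (d-1)/(2d), (d-2)/(3d))`.
-/

noncomputable section

open Filter Finset

lemma sum_Icc_one_natCast_sub {M : Type*} [AddCommMonoid M] (d : ℕ) (f : ℝ → M) :
    ∑ s ∈ Icc 1 d, f ((d : ℝ) - s) = ∑ m ∈ range d, f m := by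
  refine sum_nbij' (fun s => d - s) (fun m => d - m) ?_ ?_ ?_ ?_ ?_ <;> intro s hs <;>
    simp only [mem_Icc, mem_range] at hs ⊢ <;> try omega
  rw [Nat.cast_sub hs.2]

lemma sum_range_choose_eq_choose_succ (d p : ℕ) :
    ∑ m ∈ range d, m.choose p = d.choose (p + 1) := by
  induction d with
  | zero => simp
  | succ d ih => rw [sum_range_succ, ih, Nat.choose_succ_succ', add_comm]

lemma prod_range_natCast_sub_div (m d p : ℕ) :
    ∏ k ∈ range p, (((m : ℝ) - k) / (d - k)) = m.descFactorial p / d.descFactorial p := by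
  simp only [prod_div_distrib, ← descPochhammer_eval_eq_prod_range,
    descPochhammer_eval_eq_descFactorial]

lemma sum_range_descFactorial_div (d p : ℕ) (hp : p ≤ d) :
    ∑ m ∈ range d, (m.descFactorial p / d.descFactorial p : ℝ) = (d - p) / (p + 1) := by
  have hchoose : (d.choose p : ℝ) ≠ 0 := by exact_mod_cast (Nat.choose_pos hp).ne'
  have hfact : (p.factorial : ℝ) ≠ 0 := by positivity
  have hsucc : (d.choose (p + 1) : ℝ) * (p + 1) = d.choose p * (d - p) := by
    rw [← Nat.cast_sub hp]; exact_mod_cast Nat.choose_succ_right_eq d p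
  simp only [Nat.descFactorial_eq_factorial_mul_choose, Nat.cast_mul, mul_div_mul_left _ _ hfact,
    ← sum_div]
  rw [← Nat.cast_sum, sum_range_choose_eq_choose_succ]
  field_simp
  linear_combination hsucc

lemma sum_Icc_prod_sub_div (d p : ℕ) (hp : p ≤ d) :
    ∑ s ∈ Icc 1 d, ∏ k ∈ range p, (((d : ℝ) - s - k) / (d - k)) = (d - p) / (p + 1) := by
  rw [sum_Icc_one_natCast_sub d (fun x => ∏ k ∈ range p, ((x - k) / (d - k)))]
  simp only [prod_range_natCast_sub_div, sum_range_descFactorial_div d p hp]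

lemma tendsto_psi_atTop (t : ℝ) : Tendsto (fun ν => psi ν t) atTop (nhds 1) := by
  have hden : Tendsto (fun ν : ℝ => 2 * ν ^ 2) atTop atTop :=
    (tendsto_pow_atTop two_ne_zero).const_mul_atTop two_pos
  simpa [psi, Function.comp_def] using
    (Real.continuous_exp.tendsto 0).comp (tendsto_const_nhds.div_atTop hden)

lemma tendsto_alpha_atTop (d p : ℕ) (hp : p ≤ d) :
    Tendsto (fun ν => alpha d ν p) atTop (nhds ((d - p) / ((p + 1) * d))) := by
  have hweights := tendsto_finsetSum (Icc 1 d) fun s _ =>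
    (tendsto_psi_atTop ((s : ℝ) / d)).const_mul (∏ k ∈ range p, (((d : ℝ) - s - k) / (d - k)))
  convert hweights.const_mul (1 / (d : ℝ)) using 2
  · rfl
  · rw [← div_div, one_div_mul_eq_div]
    simp only [mul_one, sum_Icc_prod_sub_div d p hp]

section LargeBandwidth

variable {d : ℕ}

lemma tendsto_alpha_zero_atTop (hd : d ≠ 0) :
    Tendsto (fun ν => alpha d ν 0) atTop (nhds 1) := by
  convert tendsto_alpha_atTop d 0 (Nat.zero_le d) using 2
  field_simp
  simp

lemma tendsto_alpha_one_atTop (hd : 1 ≤ d) :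
    Tendsto (fun ν => alpha d ν 1) atTop (nhds ((d - 1) / (2 * d))) := by
  convert tendsto_alpha_atTop d 1 hd using 3 <;> norm_num

lemma tendsto_alpha_two_atTop (hd : 2 ≤ d) :
    Tendsto (fun ν => alpha d ν 2) atTop (nhds ((d - 2) / (3 * d))) := by
  convert tendsto_alpha_atTop d 2 hd using 3 <;> norm_num

lemma tendsto_cConst_atTop (hd : 2 ≤ d) :
    Tendsto (cConst d) atTop (nhds ((d ^ 2 - 1) / (12 * d))) := by
  have h0 := tendsto_alpha_zero_atTop (by omega : d ≠ 0)
  have h1 := tendsto_alpha_one_atTop (by omega : 1 ≤ d)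
  have h2 := tendsto_alpha_two_atTop hd
  have hd0 : (d : ℝ) ≠ 0 := by positivity
  convert ((h0.const_mul ((d : ℝ) - 1)).mul h2 |>.sub ((h1.pow 2).const_mul (d : ℝ)) |>.add
    (h0.mul h1)) using 2
  · rfl
  · field_simp
    ring

lemma tendsto_alpha_one_sub_alpha_two_atTop (hd : 2 ≤ d) :
    Tendsto (fun ν => alpha d ν 1 - alpha d ν 2) atTop (nhds ((d + 1) / (6 * d))) := by
  have hd0 : (d : ℝ) ≠ 0 := by positivity
  convert (tendsto_alpha_one_atTop (by omega : 1 ≤ d)).sub (tendsto_alpha_two_atTop hd) using 2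
  field_simp
  ring

lemma tendsto_sigma0_atTop (hd : 2 ≤ d) :
    Tendsto (sigma0 d) atTop (nhds ((d - 1) * (2 * d - 1) / (6 * d))) := by
  have hd0 : (d : ℝ) ≠ 0 := by positivity
  convert ((tendsto_alpha_two_atTop hd).const_mul ((d : ℝ) - 1)).add
    (tendsto_alpha_one_atTop (by omega : 1 ≤ d)) using 2
  · rfl
  · field_simp
    ring

lemma tendsto_sigma2_atTop (hd : 2 ≤ d) :
    Tendsto (sigma2 d) atTop (nhds ((d ^ 2 - 2 * d + 3) / (2 * d))) := by
  have h0 := tendsto_alpha_zero_atTop (by omega : d ≠ 0)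
  have h1 := tendsto_alpha_one_atTop (by omega : 1 ≤ d)
  have h2 := tendsto_alpha_two_atTop hd
  have hd0 : (d : ℝ) ≠ 0 := by positivity
  have hd1 : (d : ℝ) + 1 ≠ 0 := by positivity
  convert ((h0.const_mul ((d : ℝ) - 2)).mul h2 |>.sub ((h1.pow 2).const_mul ((d : ℝ) - 1))
    |>.add (h0.mul h1)).div (tendsto_alpha_one_sub_alpha_two_atTop hd) (by positivity) using 2
  · rfl
  · field_simp
    ring

lemma tendsto_sigma3_atTop (hd : 2 ≤ d) :
    Tendsto (sigma3 d) atTop (nhds (-(d - 3) / (2 * d))) := by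
  have h0 := tendsto_alpha_zero_atTop (by omega : d ≠ 0)
  have h1 := tendsto_alpha_one_atTop (by omega : 1 ≤ d)
  have h2 := tendsto_alpha_two_atTop hd
  have hd0 : (d : ℝ) ≠ 0 := by positivity
  have hd1 : (d : ℝ) + 1 ≠ 0 := by positivity
  convert ((h1.pow 2).sub (h0.mul h2)).div (tendsto_alpha_one_sub_alpha_two_atTop hd)
    (by positivity) using 2
  · rfl
  · field_simp
    ring

end LargeBandwidth

/-- large-bandwidth limits of c_d and of the σᵢ/c_d. -/
theorem sigma_over_c_tendsto (d : ℕ) (hd : 2 ≤ d) :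
    Filter.Tendsto (fun ν : ℝ => cConst d ν) Filter.atTop
        (nhds (((d : ℝ) ^ 2 - 1) / (12 * (d : ℝ))))
      ∧ Filter.Tendsto (fun ν : ℝ => sigma0 d ν / cConst d ν) Filter.atTop
        (nhds (2 * (2 * (d : ℝ) - 1) / ((d : ℝ) + 1)))
      ∧ Filter.Tendsto (fun ν : ℝ => sigma1 d ν / cConst d ν) Filter.atTop
        (nhds (-6 / ((d : ℝ) + 1)))
      ∧ Filter.Tendsto (fun ν : ℝ => sigma2 d ν / cConst d ν) Filter.atTop
        (nhds (6 * ((d : ℝ) ^ 2 - 2 * (d : ℝ) + 3) / (((d : ℝ) + 1) * ((d : ℝ) - 1))))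
      ∧ Filter.Tendsto (fun ν : ℝ => sigma3 d ν / cConst d ν) Filter.atTop
        (nhds (-6 * ((d : ℝ) - 3) / (((d : ℝ) + 1) * ((d : ℝ) - 1)))) := by
  have hd' : (2 : ℝ) ≤ d := by exact_mod_cast hd
  have hd0 : (d : ℝ) ≠ 0 := by positivity
  have hd1 : (d : ℝ) - 1 ≠ 0 := by linarith
  have hd2 : (d : ℝ) + 1 ≠ 0 := by linarith
  have hsq : (d : ℝ) ^ 2 - 1 ≠ 0 := by nlinarith
  have hc := tendsto_cConst_atTop hd
  have hc0 : ((d : ℝ) ^ 2 - 1) / (12 * d) ≠ 0 := div_ne_zero hsq (by positivity)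
  have hsigma1 : Tendsto (sigma1 d) atTop (nhds (-((d - 1) / (2 * d)))) :=
    (tendsto_alpha_one_atTop (by omega)).neg
  refine ⟨hc, ?_, ?_, ?_, ?_⟩
  · convert (tendsto_sigma0_atTop hd).div hc hc0 using 2
    · rfl
    · field_simp
      ring
  · convert hsigma1.div hc hc0 using 2
    · rfl
    · field_simp
      ring
  · convert (tendsto_sigma2_atTop hd).div hc hc0 using 2
    · rfl
    · field_simp
      ring
  · convert (tendsto_sigma3_atTop hd).div hc hc0 using 2
    · rfl
    · field_simp
      ring
end
end

section
/- Let d ≥ 1, ν > 0 and n ≥ 1. Let S_1,…,S_n be i.i.d. copies of the LIME random subset S of {1,…,d}, and for each i set π_i = ψ_ν(|S_i|/d) and ζ_i = (1, 1{1 ∉ S_i}, …, 1{d ∉ S_i}) ∈ ℝ^{d+1}. Define the random matrix Σ̂_n = (1/n) Σ_{i=1}^n π_i ζ_i ζ_iᵀ and its expectation Σ = E[π ζ ζᵀ]. Then for every t ≥ 0, P(‖Σ̂_n − Σ‖_op ≥ t) ≤ 4d · exp(−n t² / (32 d²)), where ‖·‖_op is the ℓ²→ℓ² operator norm on ℝ^{(d+1)×(d+1)}.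 -/
noncomputable section

open MeasureTheory

/-- Subsets of a finite index set carry the discrete σ-algebra. -/
instance finsetMeasurableSpace (d : ℕ) : MeasurableSpace (Finset (Fin d)) := ⊤

/-- The probability that the LIME random subset equals a given set `A`. -/
def limeWeight (d : ℕ) (A : Finset (Fin d)) : ℝ :=
  if 1 ≤ A.card then (1 / (d : ℝ)) * ((d.choose A.card : ℝ))⁻¹ else 0

/-- The vector of interpretable features with a leading 1 for the intercept:
ζ(S) = (1, z₁, …, z_d) with z_j = 1{j ∉ S}. -/
def zeta (d : ℕ) (S : Finset (Fin d)) : Fin (d + 1) → ℝ :=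
  Fin.cons 1 (fun j : Fin d => if j ∉ S then (1 : ℝ) else 0)

/-- The ℓ²→ℓ² operator norm of a square real matrix. -/
def opNorm {m : ℕ} (A : Matrix (Fin m) (Fin m) ℝ) : ℝ :=
  ‖Matrix.toEuclideanCLM (𝕜 := ℝ) A‖

/-- The Euclidean norm of a vector of ℝ^m. -/
def enorm {m : ℕ} (v : Fin m → ℝ) : ℝ := Real.sqrt (∑ a, (v a) ^ 2)

/-- Σ = E[π ζ ζᵀ] ∈ ℝ^{(d+1)×(d+1)}. -/
def SigmaE (d : ℕ) (ν : ℝ) : Matrix (Fin (d + 1)) (Fin (d + 1)) ℝ :=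
  Matrix.of fun a b =>
    limeExp d (fun S => psi ν ((S.card : ℝ) / (d : ℝ)) * zeta d S a * zeta d S b)

/-!
Every entry of `Σ̂_n - Σ` is `n⁻¹` times a sum of `n` independent centred variables, each the
centring of a `[0, 1]`-valued function of `S_i`, so by Hoeffding's inequality it exceeds `s` in
absolute value with probability at most `2 exp (-2 n s²)`. The operator norm is bounded by the
Frobenius norm, so `‖Σ̂_n - Σ‖ ≥ t` forces some entry to be at least `t / (d + 1)`; a union
bound over the `(d + 1)²` entries gives `2 (d + 1)² exp (-2 n t² / (d + 1)²)`, and together with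
the trivial bound `1` this is below `4 d exp (-n t² / (32 d²))`.
-/

open ProbabilityTheory Finset

lemma opNorm_le_sqrt_sum_sq {m : ℕ} (A : Matrix (Fin m) (Fin m) ℝ) :
    opNorm A ≤ Real.sqrt (∑ a, ∑ b, A a b ^ 2) := by
  refine ContinuousLinearMap.opNorm_le_bound _ (Real.sqrt_nonneg _) fun x => ?_
  rw [EuclideanSpace.norm_eq, EuclideanSpace.norm_eq, ← Real.sqrt_mul (by positivity)]
  refine Real.sqrt_le_sqrt ?_
  rw [sum_mul]
  simp only [Real.norm_eq_abs, sq_abs, Matrix.ofLp_toEuclideanCLM, Matrix.mulVec, dotProduct]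
  exact sum_le_sum fun a _ => sum_mul_sq_le_sq_mul_sq _ (A a) x

lemma exists_le_abs_apply_of_le_opNorm {m : ℕ} [NeZero m] {A : Matrix (Fin m) (Fin m) ℝ}
    {t : ℝ} (ht : t ≤ opNorm A) : ∃ a b, t / m ≤ |A a b| := by
  by_contra! h
  have hmR : (0 : ℝ) < m := Nat.cast_pos.2 (NeZero.pos m)
  have htpos : 0 < t := (div_pos_iff_of_pos_right hmR).1 ((abs_nonneg _).trans_lt (h 0 0))
  have hsum : ∑ a, ∑ b, A a b ^ 2 < ∑ _a : Fin m, ∑ _b : Fin m, (t / m) ^ 2 :=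
    sum_lt_sum_of_nonempty univ_nonempty fun a _ =>
      sum_lt_sum_of_nonempty univ_nonempty fun b _ =>
        sq_lt_sq' (abs_lt.1 (h a b)).1 (abs_lt.1 (h a b)).2
  have hsq : ∑ _a : Fin m, ∑ _b : Fin m, (t / m) ^ 2 = t ^ 2 := by
    simp only [sum_const, card_univ, Fintype.card_fin, nsmul_eq_mul]
    field_simp
  have := (opNorm_le_sqrt_sum_sq A).trans_lt ((Real.sqrt_lt' htpos).2 (hsq ▸ hsum))
  linarith

lemma opNorm_smul {m : ℕ} (c : ℝ) (A : Matrix (Fin m) (Fin m) ℝ) :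
    opNorm (c • A) = |c| * opNorm A := by
  simp [opNorm, norm_smul]

lemma le_opNorm_inv_smul_iff {m : ℕ} {c : ℝ} (hc : 0 < c) (A : Matrix (Fin m) (Fin m) ℝ)
    (t : ℝ) : t ≤ opNorm (c⁻¹ • A) ↔ c * t ≤ opNorm A := by
  rw [opNorm_smul, abs_inv, abs_of_pos hc, inv_mul_eq_div, le_div_iff₀ hc, mul_comm]

lemma inv_smul_sum_sub {M : Type*} [AddCommGroup M] [Module ℝ M] {n : ℕ} (hn : n ≠ 0)
    (v : Fin n → M) (c : M) : (n : ℝ)⁻¹ • ∑ i, v i - c = (n : ℝ)⁻¹ • ∑ i, (v i - c) := by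
  rw [sum_sub_distrib, sum_const, card_univ, Fintype.card_fin, smul_sub,
    ← Nat.cast_smul_eq_nsmul ℝ, smul_smul, inv_mul_cancel₀ (Nat.cast_ne_zero.2 hn), one_smul]

section Hoeffding

variable {Ω ι : Type*} [MeasurableSpace Ω] {P : Measure Ω} [IsProbabilityMeasure P] [Fintype ι]

lemma measure_le_abs_sum_sub_integral_le {Y : ι → Ω → ℝ} (hindep : iIndepFun Y P)
    (hmeas : ∀ i, Measurable (Y i)) (hY : ∀ i ω, Y i ω ∈ Set.Icc 0 1) {ε : ℝ} (hε : 0 ≤ ε) :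
    P {ω | ε ≤ |∑ i, (Y i ω - ∫ ω', Y i ω' ∂P)|}
      ≤ ENNReal.ofReal (2 * Real.exp (-2 * ε ^ 2 / Fintype.card ι)) := by
  have hsubG : HasSubgaussianMGF (fun ω => ∑ i, (Y i ω - ∫ ω', Y i ω' ∂P))
      (∑ _i : ι, (‖(1 : ℝ) - 0‖₊ / 2) ^ 2) P :=
    HasSubgaussianMGF.sum_of_iIndepFun
      (hindep.comp (fun i y => y - ∫ ω', Y i ω' ∂P) fun _ => measurable_id.sub_const _)
      fun i _ => hasSubgaussianMGF_of_mem_Icc (hmeas i).aemeasurable (ae_of_all _ (hY i))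
  have htail : ∀ Z : Ω → ℝ, HasSubgaussianMGF Z (∑ _i : ι, (‖(1 : ℝ) - 0‖₊ / 2) ^ 2) P →
      P {ω | ε ≤ Z ω} ≤ ENNReal.ofReal (Real.exp (-2 * ε ^ 2 / Fintype.card ι)) := by
    intro Z hZ
    rw [← ofReal_measureReal]
    refine ENNReal.ofReal_le_ofReal ((hZ.measure_ge_le hε).trans_eq ?_)
    simp only [sub_zero, nnnorm_one, one_div, inv_pow, sum_const, card_univ, nsmul_eq_mul,
      NNReal.coe_mul, NNReal.coe_natCast, NNReal.coe_inv, NNReal.coe_pow, NNReal.coe_ofNat, neg_mul,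
      Real.exp_eq_exp]
    ring
  have hsplit : {ω | ε ≤ |∑ i, (Y i ω - ∫ ω', Y i ω' ∂P)|} ⊆
      {ω | ε ≤ ∑ i, (Y i ω - ∫ ω', Y i ω' ∂P)} ∪ {ω | ε ≤ -∑ i, (Y i ω - ∫ ω', Y i ω' ∂P)} :=
    fun _ hω => le_abs.1 hω.out
  calc _ ≤ _ := measure_mono hsplit
    _ ≤ _ := measure_union_le _ _
    _ ≤ _ := add_le_add (htail _ hsubG) (htail _ hsubG.neg)
    _ = _ := by rw [← ENNReal.ofReal_add (by positivity) (by positivity), two_mul]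

lemma measure_le_opNorm_sum_sub_integral_le {α : Type*} [MeasurableSpace α] {m : ℕ} [NeZero m]
    {X : ι → Ω → α} (hindep : iIndepFun X P) (hmeas : ∀ i, Measurable (X i))
    {f : α → Matrix (Fin m) (Fin m) ℝ} (hf : ∀ a b, Measurable fun x => f x a b)
    (hf01 : ∀ x a b, f x a b ∈ Set.Icc 0 1) {t : ℝ} (ht : 0 ≤ t) :
    P {ω | t ≤ opNorm (∑ i, (f (X i ω) - Matrix.of fun a b => ∫ ω', f (X i ω') a b ∂P))}
      ≤ ENNReal.ofReal (2 * m ^ 2 * Real.exp (-2 * t ^ 2 / (Fintype.card ι * m ^ 2))) := by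
  set E : Fin m × Fin m → Set Ω :=
    fun p => {ω | t / m ≤ |∑ i, (f (X i ω) p.1 p.2 - ∫ ω', f (X i ω') p.1 p.2 ∂P)|}
  have hentry : ∀ p, P (E p)
      ≤ ENNReal.ofReal (2 * Real.exp (-2 * t ^ 2 / (Fintype.card ι * m ^ 2))) := by
    rintro ⟨a, b⟩
    convert measure_le_abs_sum_sub_integral_le (Y := fun i ω => f (X i ω) a b)
      (hindep.comp (fun _ x => f x a b) fun _ => hf a b) (fun i => (hf a b).comp (hmeas i))
      (fun i ω => hf01 (X i ω) a b) (ε := t / m) (by positivity) using 4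
    field_simp
  calc _ ≤ P (⋃ p, E p) := by
        refine measure_mono fun ω hω => ?_
        obtain ⟨a, b, hab⟩ := exists_le_abs_apply_of_le_opNorm hω.out
        simp only [Matrix.sum_apply, Matrix.sub_apply, Matrix.of_apply] at hab
        exact Set.mem_iUnion.2 ⟨(a, b), hab⟩
    _ ≤ ∑ p, P (E p) := measure_iUnion_fintype_le _ _
    _ ≤ ∑ _p : Fin m × Fin m,
          ENNReal.ofReal (2 * Real.exp (-2 * t ^ 2 / (Fintype.card ι * m ^ 2))) :=
        sum_le_sum fun p _ => hentry p
    _ = _ := by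
        rw [sum_const, card_univ, Fintype.card_prod, Fintype.card_fin, nsmul_eq_mul,
          ← ENNReal.ofReal_natCast, ← ENNReal.ofReal_mul (by positivity)]
        congr 1
        push_cast
        ring

end Hoeffding

lemma min_one_le_four_mul_exp {d x : ℝ} (hd : 1 ≤ d) (hx : 0 ≤ x) :
    min 1 (2 * (d + 1) ^ 2 * Real.exp (-2 * x / (d + 1) ^ 2))
      ≤ 4 * d * Real.exp (-x / (32 * d ^ 2)) := by
  set y := Real.exp (-x / (32 * d ^ 2))
  have hexp : Real.exp (-2 * x / (d + 1) ^ 2) ≤ y ^ 2 := by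
    rw [← Real.exp_nat_mul, Real.exp_le_exp, div_le_iff₀ (by positivity)]
    have : (d + 1) ^ 2 ≤ 4 * d ^ 2 := by nlinarith
    field_simp
    push_cast
    nlinarith [mul_le_mul_of_nonneg_left this hx]
  have hbound : 2 * (d + 1) ^ 2 * Real.exp (-2 * x / (d + 1) ^ 2) ≤ (4 * d * y) ^ 2 / 2 := by
    have : 2 * (d + 1) ^ 2 ≤ 8 * d ^ 2 := by nlinarith
    calc _ ≤ 8 * d ^ 2 * y ^ 2 := by gcongr
      _ = _ := by ring
  have ha : 0 ≤ 4 * d * y := by positivity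
  rcases le_total 1 (4 * d * y) with h | h
  · exact (min_le_left _ _).trans h
  · exact (min_le_right _ _).trans (hbound.trans (by nlinarith))

instance discreteMeasurableSpaceFinset (d : ℕ) : DiscreteMeasurableSpace (Finset (Fin d)) :=
  ⟨fun _ => trivial⟩

lemma limeExp_eq_sum_limeWeight_mul (d : ℕ) (g : Finset (Fin d) → ℝ) :
    limeExp d g = ∑ A, limeWeight d A * g A := by
  have hweight : ∀ A : Finset (Fin d), limeWeight d A * g A =
      ∑ s ∈ Icc 1 d, if A.card = s then 1 / (d : ℝ) * ((d.choose s : ℝ))⁻¹ * g A else 0 := by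
    intro A
    rw [sum_ite_eq]
    simp [limeWeight, A.card_le_univ.trans_eq (Fintype.card_fin d)]
  simp_rw [hweight]
  rw [sum_comm, limeExp, mul_sum]
  refine sum_congr rfl fun s _ => ?_
  rw [← sum_filter, mul_sum, mul_sum]
  exact sum_congr rfl fun A _ => by ring

lemma limeWeight_nonneg (d : ℕ) (A : Finset (Fin d)) : 0 ≤ limeWeight d A := by
  unfold limeWeight; positivity

lemma integral_comp_eq_limeExp {Ω : Type*} [MeasurableSpace Ω] {P : Measure Ω}
    [IsProbabilityMeasure P] {d : ℕ} {S : Ω → Finset (Fin d)} (hS : Measurable S)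
    (hdist : ∀ A, P {ω | S ω = A} = ENNReal.ofReal (limeWeight d A)) (g : Finset (Fin d) → ℝ) :
    ∫ ω, g (S ω) ∂P = limeExp d g := by
  rw [← integral_map hS.aemeasurable Measurable.of_discrete.aestronglyMeasurable,
    integral_fintype .of_finite, limeExp_eq_sum_limeWeight_mul]
  refine sum_congr rfl fun A _ => ?_
  rw [map_measureReal_apply hS (measurableSet_singleton A), measureReal_def]
  simp_rw [Set.preimage, Set.mem_singleton_iff, hdist, smul_eq_mul,
    ENNReal.toReal_ofReal (limeWeight_nonneg d A)]

lemma psi_mem_Icc (ν t : ℝ) : psi ν t ∈ Set.Icc 0 1 :=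
  ⟨(Real.exp_pos _).le, Real.exp_le_one_iff.2 <|
    div_nonpos_of_nonpos_of_nonneg (neg_nonpos.2 (sq_nonneg _)) (by positivity)⟩

lemma zeta_mem_Icc (d : ℕ) (S : Finset (Fin d)) (a : Fin (d + 1)) : zeta d S a ∈ Set.Icc 0 1 := by
  cases a using Fin.cases with
  | zero => simp [zeta]
  | succ j => by_cases hj : j ∈ S <;> simp [zeta, hj]

-- `π ζ ζᵀ` for the LIME sample `S`
def limeOuter (d : ℕ) (ν : ℝ) (S : Finset (Fin d)) : Matrix (Fin (d + 1)) (Fin (d + 1)) ℝ :=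
  psi ν ((S.card : ℝ) / (d : ℝ)) • Matrix.vecMulVec (zeta d S) (zeta d S)

lemma limeOuter_apply_mem_Icc (d : ℕ) (ν : ℝ) (S : Finset (Fin d)) (a b : Fin (d + 1)) :
    limeOuter d ν S a b ∈ Set.Icc 0 1 := by
  simp only [limeOuter, Matrix.smul_apply, Matrix.vecMulVec_apply, smul_eq_mul]
  exact unitInterval.mul_mem (psi_mem_Icc _ _)
    (unitInterval.mul_mem (zeta_mem_Icc d S a) (zeta_mem_Icc d S b))

lemma integral_limeOuter_eq_SigmaE {Ω : Type*} [MeasurableSpace Ω] {P : Measure Ω}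
    [IsProbabilityMeasure P] {d : ℕ} (ν : ℝ) {S : Ω → Finset (Fin d)} (hS : Measurable S)
    (hdist : ∀ A, P {ω | S ω = A} = ENNReal.ofReal (limeWeight d A)) :
    (Matrix.of fun a b => ∫ ω, limeOuter d ν (S ω) a b ∂P) = SigmaE d ν := by
  ext a b
  refine (integral_comp_eq_limeExp hS hdist fun T => limeOuter d ν T a b).trans ?_
  simp [limeOuter, SigmaE, Matrix.vecMulVec_apply, mul_assoc]

theorem SigmaHat_concentration_general (d : ℕ) (hd : 1 ≤ d) (ν : ℝ)
    (n : ℕ) {Ω : Type} [MeasurableSpace Ω] (P : Measure Ω)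
    [IsProbabilityMeasure P] (Ss : Fin n → Ω → Finset (Fin d))
    (hmeas : ∀ i, Measurable (Ss i))
    (hindep : ProbabilityTheory.iIndepFun Ss P)
    (hdist : ∀ i, ∀ A : Finset (Fin d),
      P {ω | Ss i ω = A} = ENNReal.ofReal (limeWeight d A)) :
    ∀ t : ℝ, 0 ≤ t →
      P {ω | t ≤ opNorm
            ((n : ℝ)⁻¹ • ∑ i : Fin n, psi ν (((Ss i ω).card : ℝ) / (d : ℝ)) •
                Matrix.vecMulVec (zeta d (Ss i ω)) (zeta d (Ss i ω))
              - SigmaE d ν)}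
        ≤ ENNReal.ofReal (4 * (d : ℝ) *
            Real.exp (-((n : ℝ) * t ^ 2) / (32 * (d : ℝ) ^ 2))) := by
  intro t ht
  have hdR : (1 : ℝ) ≤ d := by exact_mod_cast hd
  rcases Nat.eq_zero_or_pos n with rfl | hn
  · refine prob_le_one.trans ?_
    simp only [CharP.cast_eq_zero, zero_mul, neg_zero, zero_div, Real.exp_zero, mul_one,
      ENNReal.one_le_ofReal]
    linarith
  have hnR : (0 : ℝ) < n := Nat.cast_pos.2 hn
  have hHoeffding := measure_le_opNorm_sum_sub_integral_le (m := d + 1) hindep hmeas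
    (f := limeOuter d ν) (fun _ _ => .of_discrete) (limeOuter_apply_mem_Icc d ν)
    (mul_nonneg hnR.le ht)
  have hexponent :
      -2 * ((n : ℝ) * t) ^ 2 / (n * (d + 1) ^ 2) = -2 * (n * t ^ 2) / (d + 1) ^ 2 := by
    field_simp
  simp only [integral_limeOuter_eq_SigmaE ν (hmeas _) (hdist _), Fintype.card_fin, Nat.cast_add,
    Nat.cast_one, hexponent] at hHoeffding
  simp_rw [inv_smul_sum_sub hn.ne', le_opNorm_inv_smul_iff hnR]
  calc _ ≤ ENNReal.ofReal (min 1 (2 * (d + 1) ^ 2 *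
          Real.exp (-2 * (n * t ^ 2) / (d + 1) ^ 2))) := by
        rw [ENNReal.ofReal_min, ENNReal.ofReal_one]
        exact le_min prob_le_one hHoeffding
    _ ≤ _ := ENNReal.ofReal_le_ofReal (min_one_le_four_mul_exp hdR (by positivity))

/-- concentration of the empirical covariance matrix
Σ̂_n = (1/n)∑ᵢ πᵢ ζᵢ ζᵢᵀ around Σ = E[π ζ ζᵀ] in operator norm:
P(‖Σ̂_n − Σ‖_op ≥ t) ≤ 4d·exp(−nt²/(32d²)). -/
theorem SigmaHat_concentration (d : ℕ) (hd : 1 ≤ d) (ν : ℝ) (hν : 0 < ν)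
    (n : ℕ) (hn : 1 ≤ n) {Ω : Type} [MeasurableSpace Ω] (P : Measure Ω)
    [IsProbabilityMeasure P] (Ss : Fin n → Ω → Finset (Fin d))
    (hmeas : ∀ i, Measurable (Ss i))
    (hindep : ProbabilityTheory.iIndepFun Ss P)
    (hdist : ∀ i, ∀ A : Finset (Fin d),
      P {ω | Ss i ω = A} = ENNReal.ofReal (limeWeight d A)) :
    ∀ t : ℝ, 0 ≤ t →
      P {ω | t ≤ opNorm
            ((n : ℝ)⁻¹ • ∑ i : Fin n, psi ν (((Ss i ω).card : ℝ) / (d : ℝ)) •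
                Matrix.vecMulVec (zeta d (Ss i ω)) (zeta d (Ss i ω))
              - SigmaE d ν)}
        ≤ ENNReal.ofReal (4 * (d : ℝ) *
            Real.exp (-((n : ℝ) * t ^ 2) / (32 * (d : ℝ) ^ 2))) :=
  SigmaHat_concentration_general d hd ν n P Ss hmeas hindep hdist
end
end

section
/- Let d ≥ 1, ν > 0, and let J ⊆ {1,…,d} be a set of p distinct indices. Let S be the LIME random subset of {1,…,d} with z_j = 1{j ∉ S} and π = ψ_ν(|S|/d). Then E[π · Π_{j∈J} z_j] = α_p(d,ν), and for every k ∈ {1,…,d} with k ∉ J, E[π · z_k · Π_{j∈J} z_j] = α_{p+1}(d,ν). -/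
noncomputable section

/-! Given `|S| = s`, the set `S` avoids the `p` indices of `J` for exactly `C(d - p, s)` of the
`C(d, s)` equally likely choices, and `C(d - p, s) / C(d, s) = ∏_{k<p} (d - s - k)/(d - k)`;
averaging `ψ_ν(s/d)` times this ratio over `s` gives `α_p(d, ν)`. Since `z_k ∏_{j∈J} z_j` is the
product over `J ∪ {k}`, the second identity is the first one for that set. -/

open Finset

lemma sum_card_eq_prod_indicator_notMem_eq_choose {α : Type*} [Fintype α] [DecidableEq α]
    (J : Finset α) (s : ℕ) :
    ∑ S ∈ univ.filter (fun S : Finset α => S.card = s),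
      (∏ j ∈ J, (if j ∉ S then (1 : ℝ) else 0)) = ((Fintype.card α - #J).choose s : ℝ) := by
  have hfilter : {S ∈ univ.filter (fun S : Finset α => S.card = s) | ∀ j ∈ J, j ∉ S} =
      powersetCard s Jᶜ := by
    ext S
    simp only [mem_filter, mem_univ, true_and, mem_powersetCard, subset_compl_iff_disjoint_right,
      disjoint_right]
    tauto
  simp_rw [prod_ite_zero, prod_const_one]
  rw [sum_boole, hfilter, card_powersetCard, card_compl]

lemma cast_choose_mul_succ_eq (n s : ℕ) :
    (n.choose s : ℝ) * (n + 1) = ((n + 1).choose s : ℝ) * ((n + 1 : ℝ) - s) := by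
  rcases le_or_gt s (n + 1) with h | h
  · have key := congrArg (fun m : ℕ => (m : ℝ)) (Nat.choose_mul_succ_eq n s)
    push_cast [Nat.cast_sub h] at key
    exact key
  · simp [Nat.choose_eq_zero_of_lt h, Nat.choose_eq_zero_of_lt (by omega : n < s)]

lemma choose_sub_eq_prod_mul_choose {n p : ℕ} (s : ℕ) (hp : p ≤ n) :
    ((n - p).choose s : ℝ) =
      (∏ k ∈ range p, (((n : ℝ) - s - k) / ((n : ℝ) - k))) * (n.choose s : ℝ) := by
  induction p with
  | zero => simp
  | succ p ih =>
    obtain ⟨m, hm⟩ : ∃ m, n - p = m + 1 := ⟨n - p - 1, by omega⟩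
    have hnp : ((m : ℝ) + 1) = n - p := by
      rw [← Nat.cast_add_one, ← hm, Nat.cast_sub (by omega)]
    have hstep := cast_choose_mul_succ_eq m s
    rw [hnp, ← hm] at hstep
    have hne : (n : ℝ) - p ≠ 0 := by rw [← hnp]; positivity
    rw [show n - (p + 1) = m by omega, prod_range_succ, mul_right_comm, ← ih (by omega)]
    field_simp
    linear_combination hstep

lemma limeExp_psi_mul_prod_indicator_notMem (d : ℕ) (ν : ℝ) (J : Finset (Fin d)) :
    limeExp d (fun S => psi ν ((S.card : ℝ) / (d : ℝ)) *
        ∏ j ∈ J, (if j ∉ S then (1 : ℝ) else 0)) = alpha d ν #J := by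
  unfold limeExp alpha
  congr 1
  refine sum_congr rfl fun s hs => ?_
  have hsd : s ≤ d := (mem_Icc.mp hs).2
  have hJ : #J ≤ d := by simpa using card_le_univ J
  have hpsi : ∑ S ∈ univ.filter (fun S : Finset (Fin d) => S.card = s),
      psi ν ((S.card : ℝ) / d) * ∏ j ∈ J, (if j ∉ S then (1 : ℝ) else 0) =
      psi ν ((s : ℝ) / d) * ((d - #J).choose s : ℝ) := by
    have hcount := sum_card_eq_prod_indicator_notMem_eq_choose J s
    rw [Fintype.card_fin] at hcount
    rw [← hcount, mul_sum]
    exact sum_congr rfl fun S hS => by rw [(mem_filter.mp hS).2]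
  have hchoose : (d.choose s : ℝ) ≠ 0 := Nat.cast_ne_zero.mpr (Nat.choose_pos hsd).ne'
  rw [hpsi, choose_sub_eq_prod_mul_choose s hJ]
  field_simp

theorem lime_indicator_moments_general (d : ℕ) (ν : ℝ)
    (J : Finset (Fin d)) :
    limeExp d (fun S => psi ν ((S.card : ℝ) / (d : ℝ)) *
        ∏ j ∈ J, (if j ∉ S then (1 : ℝ) else 0)) = alpha d ν J.card
      ∧ ∀ k : Fin d, k ∉ J →
        limeExp d (fun S => psi ν ((S.card : ℝ) / (d : ℝ)) *
            (if k ∉ S then (1 : ℝ) else 0) *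
            ∏ j ∈ J, (if j ∉ S then (1 : ℝ) else 0)) = alpha d ν (J.card + 1) := by
  refine ⟨limeExp_psi_mul_prod_indicator_notMem d ν J, fun k hk => ?_⟩
  rw [← card_insert_of_notMem hk, ← limeExp_psi_mul_prod_indicator_notMem]
  simp_rw [prod_insert hk, mul_assoc]

/-- for a set J of p distinct indices, E[π ∏_{j∈J} z_j] = α_p and,
for k ∉ J, E[π z_k ∏_{j∈J} z_j] = α_{p+1}. -/
theorem lime_indicator_moments (d : ℕ) (hd : 1 ≤ d) (ν : ℝ) (hν : 0 < ν)
    (J : Finset (Fin d)) :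
    limeExp d (fun S => psi ν ((S.card : ℝ) / (d : ℝ)) *
        ∏ j ∈ J, (if j ∉ S then (1 : ℝ) else 0)) = alpha d ν J.card
      ∧ ∀ k : Fin d, k ∉ J →
        limeExp d (fun S => psi ν ((S.card : ℝ) / (d : ℝ)) *
            (if k ∉ S then (1 : ℝ) else 0) *
            ∏ j ∈ J, (if j ∉ S then (1 : ℝ) else 0)) = alpha d ν (J.card + 1) :=
  lime_indicator_moments_general d ν J
end
end

section
/- Let d ≥ 2, let u_1,…,u_d be positive reals, and let S be the LIME random subset of {1,…,d}. Fix 1 ≤ j ≤ d. Then E[(φ_S)_j] = E[z_j (φ_S)_j] = ((d−1)/(2d)) · (u_j/√(Σ_{k=1}^d u_k²)) · E[(1 − H_S)^{−1/2} | j ∉ S], where the conditional expectation given the event {j ∉ S} is E[1{j∉S} (1−H_S)^{−1/2}] / P(j ∉ S). -/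
/-!
If `j ∉ S` then `∑_{k ∉ S} u_k² = (1 - H_S) ‖u‖²`, so `(φ_S)_j = (u_j / ‖u‖) (1 - H_S)^{-1/2} 1{j ∉ S}`;
moreover `z_j (φ_S)_j = (φ_S)_j`. Hence both expectations factor as `u_j / ‖u‖` times
`E[1{j ∉ S} (1 - H_S)^{-1/2}]`, and it remains to compute `P(j ∉ S)`: given `|S| = s` it is
`C(d-1, s) / C(d, s) = (d - s) / d`, whose average over `s ∈ {1, …, d}` is `(d - 1) / (2d)`.
-/

noncomputable section

/-- Normalized TF-IDF of the perturbed document obtained by deleting the words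
indexed by `S`: `(φ_S)_j = 1{j ∉ S} · u_j / √(∑_{k ∉ S} u_k²)`, and `φ_S = 0`
when all words are deleted. -/
def phiS {d : ℕ} (u : Fin d → ℝ) (S : Finset (Fin d)) : Fin d → ℝ :=
  if S = Finset.univ then 0 else
    fun j => (if j ∉ S then (1 : ℝ) else 0) * u j / Real.sqrt (∑ k ∈ Sᶜ, (u k) ^ 2)

/-- `H_S = ∑_{k∈S} ω_k` with `ω_k = u_k²/∑_ℓ u_ℓ²`. -/
def HS {d : ℕ} (u : Fin d → ℝ) (S : Finset (Fin d)) : ℝ :=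
  ∑ k ∈ S, (u k) ^ 2 / (∑ l, (u l) ^ 2)

open Finset

lemma limeExp_const_mul (d : ℕ) (c : ℝ) (g : Finset (Fin d) → ℝ) :
    limeExp d (fun S => c * g S) = c * limeExp d g := by
  simp only [limeExp, mul_sum]
  exact sum_congr rfl fun _ _ => sum_congr rfl fun _ _ => by ring

lemma card_filter_card_eq_notMem {α : Type*} [Fintype α] [DecidableEq α] (a : α) (s : ℕ) :
    #{S ∈ {S : Finset α | #S = s} | a ∉ S} = (Fintype.card α - 1).choose s := by
  have h : ({S ∈ {S : Finset α | #S = s} | a ∉ S} : Finset (Finset α)) =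
      powersetCard s {a}ᶜ := by
    ext S
    simp [mem_powersetCard, subset_compl_singleton, and_comm]
  rw [h, card_powersetCard, card_compl, card_singleton]

lemma choose_pred_div_choose {d s : ℕ} (hd : 0 < d) (hs : s ≤ d) :
    ((d - 1).choose s : ℝ) / d.choose s = (d - s) / d := by
  obtain ⟨n, rfl⟩ : ∃ n, d = n + 1 := Nat.exists_eq_succ_of_ne_zero hd.ne'
  have key := Nat.choose_mul_succ_eq n s
  have hpos : (0 : ℝ) < (n + 1).choose s := by exact_mod_cast Nat.choose_pos hs
  rw [div_eq_div_iff hpos.ne' (by positivity), add_tsub_cancel_right, ← Nat.cast_sub hs]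
  exact_mod_cast key.trans (mul_comm _ _)

lemma sum_Icc_sub_eq (d : ℕ) : ∑ s ∈ Icc 1 d, ((d : ℝ) - s) = d * (d - 1) / 2 := by
  induction d with
  | zero => simp
  | succ n ih =>
    rw [sum_Icc_succ_top (by omega)]
    have shift : ∀ s ∈ Icc 1 n, ((n + 1 : ℕ) : ℝ) - s = ((n : ℝ) - s) + 1 := by
      intro s _
      push_cast
      ring
    rw [sum_congr rfl shift, sum_add_distrib, ih, sum_const, Nat.card_Icc]
    push_cast
    ring

lemma limeExp_notMem (d : ℕ) (j : Fin d) :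
    limeExp d (fun S => if j ∉ S then (1 : ℝ) else 0) = ((d : ℝ) - 1) / (2 * d) := by
  have hd : 0 < d := j.pos
  have layer : ∀ s ∈ Icc 1 d, ((d.choose s : ℝ))⁻¹ *
      ∑ S ∈ {S : Finset (Fin d) | #S = s}, (if j ∉ S then (1 : ℝ) else 0) = (d - s) / d := by
    intro s hs
    rw [sum_boole, card_filter_card_eq_notMem, Fintype.card_fin, inv_mul_eq_div,
      choose_pred_div_choose hd (mem_Icc.1 hs).2]
  rw [limeExp, sum_congr rfl layer, ← sum_div, sum_Icc_sub_eq]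
  field_simp

section phiS

variable {d : ℕ} (u : Fin d → ℝ) {S : Finset (Fin d)} {j : Fin d}

lemma one_sub_HS_eq (hu : ∑ l, u l ^ 2 ≠ 0) :
    1 - HS u S = (∑ k ∈ Sᶜ, u k ^ 2) / ∑ l, u l ^ 2 := by
  rw [HS, ← sum_div, eq_div_iff hu, sub_mul, one_mul, div_mul_cancel₀ _ hu,
    ← sum_add_sum_compl S, add_sub_cancel_left]

lemma phiS_apply_of_mem (hj : j ∈ S) : phiS u S j = 0 := by
  unfold phiS
  split_ifs <;> simp [hj]

lemma phiS_apply (hu : 0 < ∑ l, u l ^ 2) (S : Finset (Fin d)) (j : Fin d) :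
    phiS u S j = u j / √(∑ l, u l ^ 2) * if j ∉ S then (√(1 - HS u S))⁻¹ else 0 := by
  by_cases hj : j ∈ S
  · simp [phiS_apply_of_mem u hj, hj]
  have hS : S ≠ univ := fun h => hj (h ▸ mem_univ j)
  have hroot : √(∑ l, u l ^ 2) ≠ 0 := (Real.sqrt_pos.2 hu).ne'
  rw [phiS, if_neg hS, if_pos hj, if_pos hj, one_sub_HS_eq u hu.ne', Real.sqrt_div' _ hu.le,
    inv_div]
  field_simp

lemma ite_notMem_mul_phiS (S : Finset (Fin d)) (j : Fin d) :
    (if j ∉ S then (1 : ℝ) else 0) * phiS u S j = phiS u S j := by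
  by_cases hj : j ∈ S
  · rw [phiS_apply_of_mem u hj, mul_zero]
  · rw [if_pos hj, one_mul]

end phiS

/-- E[(φ_S)_j] = E[z_j (φ_S)_j]
= ((d−1)/(2d)) · (u_j/‖u‖) · E[(1−H_S)^{−1/2} | j ∉ S]. -/
theorem expected_tfidf (d : ℕ) (hd : 2 ≤ d) (u : Fin d → ℝ) (hu : ∀ k, 0 < u k)
    (j : Fin d) :
    limeExp d (fun S => phiS u S j)
        = (((d : ℝ) - 1) / (2 * (d : ℝ))) * (u j / Real.sqrt (∑ k, (u k) ^ 2)) *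
          (limeExp d (fun S => if j ∉ S then (Real.sqrt (1 - HS u S))⁻¹ else 0) /
            limeExp d (fun S => if j ∉ S then (1 : ℝ) else 0))
      ∧ limeExp d (fun S => (if j ∉ S then (1 : ℝ) else 0) * phiS u S j)
        = (((d : ℝ) - 1) / (2 * (d : ℝ))) * (u j / Real.sqrt (∑ k, (u k) ^ 2)) *
          (limeExp d (fun S => if j ∉ S then (Real.sqrt (1 - HS u S))⁻¹ else 0) /
            limeExp d (fun S => if j ∉ S then (1 : ℝ) else 0)) := by
  have hsum : 0 < ∑ k, u k ^ 2 := sum_pos (fun k _ => pow_pos (hu k) 2) ⟨j, mem_univ j⟩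
  have hd1 : (d : ℝ) - 1 ≠ 0 := by
    have : (2 : ℝ) ≤ d := by exact_mod_cast hd
    linarith
  have hE : limeExp d (fun S => phiS u S j) = u j / √(∑ k, u k ^ 2) *
      limeExp d (fun S => if j ∉ S then (√(1 - HS u S))⁻¹ else 0) := by
    simp only [phiS_apply u hsum, limeExp_const_mul]
  simp only [ite_notMem_mul_phiS, and_self]
  rw [hE, limeExp_notMem]
  field_simp
end
end

section
/- Let ω_1,…,ω_d be nonnegative reals with Σ_{k=1}^d ω_k = 1, and let S be the LIME random subset of {1,…,d} with H_S = Σ_{k∈S} ω_k. Then for d ≥ 2 and any 1 ≤ j ≤ d, E[H_S | j ∉ S] = (1−ω_j)(d+1)/(3(d−1)); and for d ≥ 3 and any distinct 1 ≤ j, k ≤ d, E[H_S | j ∉ S and k ∉ S] = (1−ω_j−ω_k)(d+1)/(4(d−2)). Here the conditional expectation given an event A with P(A) > 0 means E[H_S · 1_A]/P(A). -/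
/-!
Let `T` be the set of excluded coordinates, `m = #T`, `n = d - m`, and `W = ∑_{l ∉ T} ω_l`.
The `s`-subsets avoiding `T` are the `s`-subsets of `Tᶜ`, and
`C(n, s) / C(d, s) = C(d - s, m) / C(d, m)`; so by the hockey-stick identity the event has
probability `C(d, m + 1) / (d C(d, m))`. Each `l ∉ T` lies in a fraction `s / n` of those subsets,
and `∑ s C(d - s, m) = C(d + 1, m + 2)` gives
`E[H_S 1_{S ∩ T = ∅}] = W C(d + 1, m + 2) / (n d C(d, m))`.
The ratio is `W (d + 1) / ((m + 2) n)`; `T = {j}` and `T = {j, k}` give the two formulas.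
-/

noncomputable section

open Finset

theorem Finset.sum_Icc_one_reflect {M : Type*} [AddCommMonoid M] (f : ℕ → M) (n : ℕ) :
    ∑ s ∈ Icc 1 n, f (n - s) = ∑ i ∈ range n, f i := by
  rw [← Ico_add_one_right_eq_Icc, sum_Ico_reflect f 1 le_rfl, Nat.sub_self, range_eq_Ico]
  simp

namespace Nat

theorem sum_range_choose_eq_choose_succ_s17 (n m : ℕ) :
    ∑ i ∈ range n, i.choose m = n.choose (m + 1) := by
  induction n with
  | zero => simp
  | succ n ih => rw [sum_range_succ, ih, Nat.choose_succ_succ', add_comm]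

theorem sum_range_sub_mul_choose (n m : ℕ) :
    ∑ i ∈ range n, (n - i) * i.choose m = (n + 1).choose (m + 2) := by
  induction n with
  | zero => exact (Nat.choose_eq_zero_of_lt (by omega)).symm
  | succ n ih =>
    have peel : ∑ i ∈ range (n + 1), (n + 1 - i) * i.choose m
        = ∑ i ∈ range (n + 1), (n - i) * i.choose m + ∑ i ∈ range (n + 1), i.choose m := by
      rw [← sum_add_distrib]
      refine sum_congr rfl fun i hi => ?_
      rw [Nat.sub_add_comm (Nat.lt_succ_iff.1 (mem_range.1 hi))]
      ring
    rw [peel, sum_range_succ, Nat.sub_self, zero_mul, add_zero, ih,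
      sum_range_choose_eq_choose_succ_s17, Nat.choose_succ_succ' (n + 1) (m + 1), add_comm]

theorem sum_Icc_choose_sub_s17 (d m : ℕ) : ∑ s ∈ Icc 1 d, (d - s).choose m = d.choose (m + 1) := by
  rw [sum_Icc_one_reflect (·.choose m), sum_range_choose_eq_choose_succ_s17]

theorem sum_Icc_mul_choose_sub (d m : ℕ) :
    ∑ s ∈ Icc 1 d, s * (d - s).choose m = (d + 1).choose (m + 2) := by
  rw [← sum_range_sub_mul_choose, ← sum_Icc_one_reflect (fun i => (d - i) * i.choose m)]
  refine sum_congr rfl fun s hs => ?_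
  rw [Nat.sub_sub_self (mem_Icc.1 hs).2]

theorem choose_mul_choose_sub_comm {d m : ℕ} (hm : m ≤ d) (s : ℕ) :
    d.choose m * (d - m).choose s = d.choose s * (d - s).choose m := by
  rcases le_or_gt s (d - m) with hs | hs
  · rw [← Nat.choose_symm hm, Nat.choose_mul hs, show d - m - s = d - s - m by omega,
      Nat.choose_symm (by omega)]
  · rw [Nat.choose_eq_zero_of_lt hs, mul_zero]
    rcases le_or_gt s d with hsd | hsd
    · rw [Nat.choose_eq_zero_of_lt (by omega : d - s < m), mul_zero]
    · rw [Nat.choose_eq_zero_of_lt hsd, zero_mul]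

theorem mul_choose_sub_one (n : ℕ) {k : ℕ} (hk : 1 ≤ k) :
    n * (n - 1).choose (k - 1) = k * n.choose k := by
  obtain ⟨k, rfl⟩ := Nat.exists_eq_add_of_le' hk
  rcases n with _ | n
  · simp
  · simpa [mul_comm] using Nat.add_one_mul_choose_eq n k

end Nat

theorem Finset.sum_powersetCard_sum {α M : Type*} [DecidableEq α] [AddCommMonoid M] (A : Finset α)
    (w : α → M) {s : ℕ} (hs : 1 ≤ s) :
    ∑ S ∈ A.powersetCard s, ∑ l ∈ S, w l = (#A - 1).choose (s - 1) • ∑ l ∈ A, w l := by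
  rw [sum_comm' (t' := A) (s' := fun l => (A.powersetCard s).filter ({l} ⊆ ·)), smul_sum]
  · refine sum_congr rfl fun l hl => ?_
    rw [sum_const, card_filter_powersetCard_subset _ _ _ (singleton_subset_iff.2 hl)
      (by simpa using hs), card_singleton]
  · intro S l
    simp only [mem_filter, mem_powersetCard, singleton_subset_iff]
    exact ⟨fun h => ⟨h, h.1.1 h.2⟩, And.left⟩

theorem inv_choose_mul_choose_sub {d m s : ℕ} (hm : m ≤ d) (hs : s ≤ d) :
    ((d.choose s : ℝ))⁻¹ * (d - m).choose s = (d - s).choose m / d.choose m := by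
  have hds : (d.choose s : ℝ) ≠ 0 := by exact_mod_cast (Nat.choose_pos hs).ne'
  have hdm : (d.choose m : ℝ) ≠ 0 := by exact_mod_cast (Nat.choose_pos hm).ne'
  rw [inv_mul_eq_div, div_eq_div_iff hds hdm]
  norm_cast
  rw [mul_comm, Nat.choose_mul_choose_sub_comm hm s, mul_comm]

theorem sum_Icc_inv_choose_mul_choose_sub {d m : ℕ} (hm : m ≤ d) :
    ∑ s ∈ Icc 1 d, ((d.choose s : ℝ))⁻¹ * (d - m).choose s = d.choose (m + 1) / d.choose m := by
  rw [sum_congr rfl fun s hs => inv_choose_mul_choose_sub hm (mem_Icc.1 hs).2, ← sum_div]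
  exact_mod_cast congrArg (fun x : ℕ => (x : ℝ) / d.choose m) (Nat.sum_Icc_choose_sub_s17 d m)

theorem sum_Icc_inv_choose_mul_mul_choose_sub {d m : ℕ} (hm : m ≤ d) :
    ∑ s ∈ Icc 1 d, ((d.choose s : ℝ))⁻¹ * (s * (d - m).choose s)
      = (d + 1).choose (m + 2) / d.choose m := by
  rw [sum_congr rfl fun s hs => by
    rw [mul_left_comm, inv_choose_mul_choose_sub hm (mem_Icc.1 hs).2, mul_div_assoc'], ← sum_div]
  exact_mod_cast congrArg (fun x : ℕ => (x : ℝ) / d.choose m) (Nat.sum_Icc_mul_choose_sub d m)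

theorem limeExp_ite_disjoint {d : ℕ} (T : Finset (Fin d)) (g : Finset (Fin d) → ℝ) :
    limeExp d (fun S => if Disjoint S T then g S else 0)
      = 1 / d * ∑ s ∈ Icc 1 d, ((d.choose s : ℝ))⁻¹ * ∑ S ∈ Tᶜ.powersetCard s, g S := by
  unfold limeExp
  congr 1
  refine sum_congr rfl fun s _ => ?_
  rw [← sum_filter, filter_filter]
  congr 2
  ext S
  simp [subset_compl_iff_disjoint_right, and_comm]

theorem limeExp_ite_disjoint_one {d : ℕ} (T : Finset (Fin d)) (hT : #T ≤ d) :
    limeExp d (fun S => if Disjoint S T then 1 else 0) = d.choose (#T + 1) / (d * d.choose #T) := by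
  simp_rw [limeExp_ite_disjoint, sum_const, card_powersetCard, card_compl, Fintype.card_fin,
    nsmul_one, sum_Icc_inv_choose_mul_choose_sub hT]
  ring

theorem limeExp_ite_disjoint_sum {d : ℕ} (T : Finset (Fin d)) (hT : #T < d) (w : Fin d → ℝ) :
    limeExp d (fun S => if Disjoint S T then ∑ l ∈ S, w l else 0)
      = (∑ l ∈ Tᶜ, w l) * (d + 1).choose (#T + 2) / (d * (d - #T) * d.choose #T) := by
  have hn : ((d - #T : ℕ) : ℝ) ≠ 0 := by exact_mod_cast (Nat.sub_pos_of_lt hT).ne'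
  have level : ∀ s ∈ Icc 1 d, ((d.choose s : ℝ))⁻¹ * ∑ S ∈ Tᶜ.powersetCard s, ∑ l ∈ S, w l
      = (∑ l ∈ Tᶜ, w l) / (d - #T : ℕ) * (((d.choose s : ℝ))⁻¹ * (s * (d - #T).choose s)) := by
    intro s hs
    have hs1 := (mem_Icc.1 hs).1
    have key : ((d - #T : ℕ) : ℝ) * (d - #T - 1).choose (s - 1) = s * (d - #T).choose s := by
      exact_mod_cast Nat.mul_choose_sub_one (d - #T) hs1
    rw [sum_powersetCard_sum _ _ hs1, card_compl, Fintype.card_fin, nsmul_eq_mul, ← key]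
    field_simp
  rw [limeExp_ite_disjoint, sum_congr rfl level, ← mul_sum,
    sum_Icc_inv_choose_mul_mul_choose_sub hT.le, Nat.cast_sub hT.le]
  field_simp

theorem limeExp_cond_sum_disjoint {d : ℕ} (T : Finset (Fin d)) (hT : #T < d) (w : Fin d → ℝ) :
    limeExp d (fun S => if Disjoint S T then ∑ l ∈ S, w l else 0)
        / limeExp d (fun S => if Disjoint S T then 1 else 0)
      = (∑ l ∈ Tᶜ, w l) * (d + 1) / ((#T + 2) * (d - #T)) := by
  have hd : (d : ℝ) ≠ 0 := by exact_mod_cast (Nat.zero_lt_of_lt hT).ne'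
  have hdT : (d : ℝ) - #T ≠ 0 := sub_ne_zero.2 (by exact_mod_cast hT.ne')
  have hc : (d.choose #T : ℝ) ≠ 0 := by exact_mod_cast (Nat.choose_pos hT.le).ne'
  have hc' : (d.choose (#T + 1) : ℝ) ≠ 0 := by exact_mod_cast (Nat.choose_pos hT).ne'
  have pascal : ((d + 1 : ℕ) : ℝ) * d.choose (#T + 1) = (d + 1).choose (#T + 2) * (#T + 2 : ℕ) :=
    by exact_mod_cast Nat.add_one_mul_choose_eq d (#T + 1)
  rw [limeExp_ite_disjoint_sum T hT, limeExp_ite_disjoint_one T hT.le]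
  push_cast at pascal
  field_simp
  linear_combination (-∑ l ∈ Tᶜ, w l) * pascal

theorem conditional_expectation_HS_general (d : ℕ) (w : Fin d → ℝ)
    (hsum : ∑ k, w k = 1) :
    (2 ≤ d → ∀ j : Fin d,
        limeExp d (fun S => if j ∉ S then ∑ k ∈ S, w k else 0) /
            limeExp d (fun S => if j ∉ S then (1 : ℝ) else 0)
          = (1 - w j) * ((d : ℝ) + 1) / (3 * ((d : ℝ) - 1)))
      ∧ (3 ≤ d → ∀ j k : Fin d, j ≠ k →
        limeExp d (fun S => if j ∉ S ∧ k ∉ S then ∑ l ∈ S, w l else 0) /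
            limeExp d (fun S => if j ∉ S ∧ k ∉ S then (1 : ℝ) else 0)
          = (1 - w j - w k) * ((d : ℝ) + 1) / (4 * ((d : ℝ) - 2))) := by
  have sum_compl : ∀ T : Finset (Fin d), ∑ l ∈ Tᶜ, w l = 1 - ∑ l ∈ T, w l := fun T => by
    rw [← hsum, ← sum_compl_add_sum T w]
    ring
  constructor
  · intro hd j
    have h := limeExp_cond_sum_disjoint {j} (by rw [card_singleton]; omega) w
    simp only [disjoint_singleton_right, card_singleton, sum_compl, sum_singleton] at h
    rw [h]
    norm_num
  · intro hd j k hjk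
    have h := limeExp_cond_sum_disjoint {j, k} (by rw [card_pair hjk]; omega) w
    simp only [disjoint_insert_right, disjoint_singleton_right, card_pair hjk, sum_compl,
      sum_pair hjk] at h
    rw [h, sub_sub]
    norm_num

/-- conditional expectations of H_S = ∑_{k∈S} ω_k under the LIME law:
E[H_S | j ∉ S] = (1−ω_j)(d+1)/(3(d−1)) for d ≥ 2, and
E[H_S | j ∉ S, k ∉ S] = (1−ω_j−ω_k)(d+1)/(4(d−2)) for d ≥ 3 and j ≠ k,
where E[· | A] = E[· 1_A]/P(A). -/
theorem conditional_expectation_HS (d : ℕ) (w : Fin d → ℝ)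
    (hw : ∀ k, 0 ≤ w k) (hsum : ∑ k, w k = 1) :
    (2 ≤ d → ∀ j : Fin d,
        limeExp d (fun S => if j ∉ S then ∑ k ∈ S, w k else 0) /
            limeExp d (fun S => if j ∉ S then (1 : ℝ) else 0)
          = (1 - w j) * ((d : ℝ) + 1) / (3 * ((d : ℝ) - 1)))
      ∧ (3 ≤ d → ∀ j k : Fin d, j ≠ k →
        limeExp d (fun S => if j ∉ S ∧ k ∉ S then ∑ l ∈ S, w l else 0) /
            limeExp d (fun S => if j ∉ S ∧ k ∉ S then (1 : ℝ) else 0)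
          = (1 - w j - w k) * ((d : ℝ) + 1) / (4 * ((d : ℝ) - 2))) :=
  conditional_expectation_HS_general d w hsum
end
end
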